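/- Let n ≥ 1, and let L_1, ..., L_k be positive divisors of n, r_1^♯, ..., r_k^♯ and l_1, ..., l_k positive integers. Consider the partition p obtained by sorting the multiset consisting of, for each i, r_i^♯ copies of l_i·L_i. Then the largest part of d_BV^{(n)}(p) = Σ_{parts q of p} 𝔰(q; n) equals Σ_{i=1}^k r_i^♯·L_i·min(n/L_i, l_i). -/

import Mathlib

/-- The partition `𝔰(p;n)`: `p/n` copies of `n` followed by `p % n` (omitted if zero). -/
def sPart (n p : ℕ) : List ℕ :=
  List.replicate (p / n) n ++ if p % n = 0 then [] else [p % n]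

/-- Componentwise sum of two partitions (written as decreasing lists), padding with zeros. -/
def addParts : List ℕ → List ℕ → List ℕ
  | [], l => l
  | a :: l, [] => a :: l
  | a :: l, b :: m => (a + b) :: addParts l m

/-- Componentwise sum of a finite family of partitions. -/
def sumParts (ls : List (List ℕ)) : List ℕ := ls.foldr addParts []

lemma headD_addParts (a b : List ℕ) :
    (addParts a b).headD 0 = a.headD 0 + b.headD 0 := by
  match a, b with
  | [], l => simp [addParts]
  | a :: l, [] => simp [addParts]
  | a :: l, b :: m => simp [addParts]

lemma headD_sumParts (ls : List (List ℕ)) :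
    (sumParts ls).headD 0 = (ls.map (·.headD 0)).sum := by
  induction ls with
  | nil => simp [sumParts]
  | cons a t ih =>
    rw [show sumParts (a::t) = addParts a (sumParts t) from rfl, headD_addParts, ih]
    simp

lemma headD_sPart (n q : ℕ) (hn : 1 ≤ n) : (sPart n q).headD 0 = min n q := by
  unfold sPart
  rcases lt_or_ge q n with h | h
  · rw [Nat.div_eq_of_lt h, Nat.mod_eq_of_lt h]
    rcases Nat.eq_zero_or_pos q with rfl | hq
    · simp
    · have hq' : q ≠ 0 := Nat.pos_iff_ne_zero.mp hq
      simp [hq', min_eq_right (le_of_lt h)]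
  · have : 1 ≤ q / n := Nat.one_le_div_iff hn |>.mpr h
    rcases Nat.exists_eq_add_of_le this with ⟨c, hc⟩
    rw [hc, min_eq_left h]
    simp [List.replicate_add]

/-- For the partition `p` obtained by sorting the multiset with `r_i^♯` copies of `l_i·L_i`,
the largest part of `d_BV^{(n)}(p) = Σ_{q ∈ p} 𝔰(q;n)` equals `Σ_i r_i^♯·L_i·min(n/L_i, l_i)`. -/
theorem stmt16 (n k : ℕ) (hn : 1 ≤ n) (hk : 1 ≤ k) (L rs l : Fin k → ℕ)
    (hL : ∀ i, 1 ≤ L i) (hLn : ∀ i, L i ∣ n) (hrs : ∀ i, 1 ≤ rs i) (hl : ∀ i, 1 ≤ l i)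
    (p : List ℕ) (hsort : p.Pairwise (· ≥ ·))
    (hp : (p : Multiset ℕ)
      = ((List.ofFn fun i => List.replicate (rs i) (l i * L i)).flatten : List ℕ)) :
    (sumParts (p.map (sPart n))).headD 0 = ∑ i, rs i * (L i * min (n / L i) (l i)) := by
  rw [headD_sumParts, List.map_map]
  have h1 : (p.map ((fun x => x.headD 0) ∘ sPart n)).sum = (p.map (min n)).sum := by
    congr 1
    exact List.map_congr_left fun q _ => headD_sPart n q hn
  rw [h1]
  have h2 : (p.map (min n)).sum = (((p : Multiset ℕ).map (min n)).sum) := rfl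
  rw [h2, hp]
  have h3 : ∀ i, min n (l i * L i) = L i * min (n / L i) (l i) := by
    intro i
    have hd := Nat.mul_div_cancel' (hLn i)
    conv_lhs => rw [← hd, mul_comm (l i) (L i), Nat.mul_min_mul_left]
  simp only [Multiset.map_coe, Multiset.sum_coe, List.map_flatten, List.map_ofFn,
    List.sum_flatten, List.map_map, Function.comp, List.map_replicate, List.sum_replicate,
    smul_eq_mul, List.sum_ofFn]
  exact Finset.sum_congr rfl fun i _ => by rw [h3]
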